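/- Let a, b > 0 and define c_{a,b} := (a+b)/(a+1) and, for x ∈ [0,1), Q_{a,b}^{[S,1]}(x) := (1−x)^b (1 + c_{a,b} x/(1−x)). Then for all x ∈ [0,1): if b ≤ 1 then Q_{a,b}(x) ≤ Q_{a,b}^{[S,1]}(x), and if b ≥ 1 then Q_{a,b}(x) ≥ Q_{a,b}^{[S,1]}(x). -/

import Mathlib

open MeasureTheory

/-- The auxiliary function `Q_{a,b}(x) = a ∫₀¹ y^(a-1) (1-xy)^(b-1) dy`. -/
noncomputable def Q (a b x : ℝ) : ℝ :=
  a * ∫ y in (0:ℝ)..1, y ^ (a - 1) * (1 - x * y) ^ (b - 1)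

/-!
Put `s = 1 - x` and `z = 1 - x y`, so that `0 < s ≤ z ≤ 1` for `y ∈ [0, 1]`. Replacing the
integrand `z^(b-1)` of `Q` by `s^(b-1) (1 + (b-1)(z - s))`, which is affine in `y`, turns `Q` into
exactly `Q^{[S,1]}`. The comparison is pointwise: `z^(b-1) = s^(b-1) (s/z)^(1-b)`, and
`(s/z)^(1-b)` lies below `1 + (b-1)(1 - s/z)` by Bernoulli's inequality when `0 < b ≤ 1`, above it
by `exp t ≥ 1 + t` and `log q ≤ q - 1` when `b ≥ 1`; finally `z - s ≤ 1 - s/z` because `z ≤ 1`.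
-/

open Set Real

lemma sub_le_one_sub_div {s z : ℝ} (hs : 0 < s) (hsz : s ≤ z) (hz : z ≤ 1) :
    z - s ≤ 1 - s / z := by
  have hz₀ : 0 < z := hs.trans_le hsz
  rw [one_sub_div hz₀.ne', le_div_iff₀ hz₀]
  nlinarith

lemma rpow_eq_rpow_mul_div_rpow_neg {s z : ℝ} (hs : 0 < s) (hz : 0 < z) (r : ℝ) :
    z ^ r = s ^ r * (s / z) ^ (-r) := by
  rw [rpow_neg (div_pos hs hz).le, div_rpow hs.le hz.le]
  have := rpow_pos_of_pos hs r
  field_simp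

lemma rpow_le_rpow_mul_one_add_of_nonpos {r s z : ℝ} (hr₁ : -1 ≤ r) (hr₀ : r ≤ 0)
    (hs : 0 < s) (hsz : s ≤ z) (hz : z ≤ 1) :
    z ^ r ≤ s ^ r * (1 + r * (z - s)) := by
  have hz₀ : 0 < z := hs.trans_le hsz
  rw [rpow_eq_rpow_mul_div_rpow_neg hs hz₀]
  gcongr
  calc (s / z) ^ (-r) = (1 + (s / z - 1)) ^ (-r) := by ring_nf
    _ ≤ 1 + -r * (s / z - 1) :=
      rpow_one_add_le_one_add_mul_self (by linarith [div_pos hs hz₀]) (by linarith) (by linarith)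
    _ ≤ 1 + r * (z - s) := by nlinarith [sub_le_one_sub_div hs hsz hz]

lemma rpow_mul_one_add_le_rpow_of_nonneg {r s z : ℝ} (hr : 0 ≤ r)
    (hs : 0 < s) (hsz : s ≤ z) (hz : z ≤ 1) :
    s ^ r * (1 + r * (z - s)) ≤ z ^ r := by
  have hz₀ : 0 < z := hs.trans_le hsz
  have hq : 0 < s / z := div_pos hs hz₀
  rw [rpow_eq_rpow_mul_div_rpow_neg hs hz₀]
  gcongr
  calc 1 + r * (z - s) ≤ log (s / z) * -r + 1 := by
        nlinarith [sub_le_one_sub_div hs hsz hz, log_le_sub_one_of_pos hq]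
    _ ≤ exp (log (s / z) * -r) := add_one_le_exp _
    _ = (s / z) ^ (-r) := (rpow_def_of_pos hq _).symm

lemma mul_integral_rpow_mono {a : ℝ} (ha : 0 < a) {f g : ℝ → ℝ}
    (hf : ContinuousOn f (Icc 0 1)) (hg : ContinuousOn g (Icc 0 1))
    (hfg : ∀ y ∈ Icc (0:ℝ) 1, f y ≤ g y) :
    a * ∫ y in (0:ℝ)..1, y ^ (a - 1) * f y ≤ a * ∫ y in (0:ℝ)..1, y ^ (a - 1) * g y := by
  have hintegrable : ∀ {h : ℝ → ℝ}, ContinuousOn h (Icc 0 1) →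
      IntervalIntegrable (fun y => y ^ (a - 1) * h y) volume 0 1 := fun hh =>
    (intervalIntegral.intervalIntegrable_rpow' (by linarith)).mul_continuousOn
      (by rwa [uIcc_of_le zero_le_one])
  gcongr
  refine intervalIntegral.integral_mono_on zero_le_one (hintegrable hf) (hintegrable hg)
    fun y hy => ?_
  exact mul_le_mul_of_nonneg_left (hfg y hy) (rpow_nonneg hy.1 _)

lemma mul_integral_rpow_mul_one_add_mul_one_sub {a : ℝ} (ha : 0 < a) (k : ℝ) :
    a * ∫ y in (0:ℝ)..1, y ^ (a - 1) * (1 + k * (1 - y)) = 1 + k / (a + 1) := by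
  have hcongr : EqOn (fun y : ℝ => y ^ (a - 1) * (1 + k * (1 - y)))
      (fun y => (1 + k) * y ^ (a - 1) - k * y ^ a) (uIcc 0 1) := by
    intro y hy
    rw [uIcc_of_le zero_le_one] at hy
    have : y ^ a = y ^ (a - 1) * y := by
      rw [← rpow_add_one' hy.1 (by linarith)]; ring_nf
    simp only [this]
    ring
  rw [intervalIntegral.integral_congr hcongr, intervalIntegral.integral_sub
      ((intervalIntegral.intervalIntegrable_rpow' (by linarith)).const_mul _)
      ((intervalIntegral.intervalIntegrable_rpow' (by linarith)).const_mul _),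
    intervalIntegral.integral_const_mul, intervalIntegral.integral_const_mul,
    integral_rpow (Or.inl (by linarith)), integral_rpow (Or.inl (by linarith)),
    one_rpow, one_rpow, zero_rpow (by linarith), zero_rpow (by linarith), sub_add_cancel]
  field_simp
  ring

lemma mul_integral_rpow_mul_tangent_eq {a b x : ℝ} (ha : 0 < a) (hx : x < 1) :
    a * ∫ y in (0:ℝ)..1, y ^ (a - 1) * ((1 - x) ^ (b - 1) * (1 + (b - 1) * ((1 - x * y) - (1 - x))))
      = (1 - x) ^ b * (1 + (a + b) / (a + 1) * x / (1 - x)) := by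
  have hx' : 1 - x ≠ 0 := by linarith
  have hpow : (1 - x) ^ b = (1 - x) ^ (b - 1) * (1 - x) := by
    rw [← rpow_add_one hx', sub_add_cancel]
  simp_rw [mul_left_comm _ ((1 - x) ^ (b - 1)), show ∀ y, (1 - x * y) - (1 - x) = x * (1 - y)
    from fun y => by ring, ← mul_assoc (b - 1)]
  rw [intervalIntegral.integral_const_mul, mul_left_comm,
    mul_integral_rpow_mul_one_add_mul_one_sub ha, hpow]
  field_simp
  ring

theorem beta_QS1_bounds (a b : ℝ) (ha : 0 < a) (hb : 0 < b)
    (x : ℝ) (hx : x ∈ Set.Ico (0:ℝ) 1) :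
    (b ≤ 1 → Q a b x ≤ (1 - x) ^ b * (1 + (a + b) / (a + 1) * x / (1 - x))) ∧
    (1 ≤ b → (1 - x) ^ b * (1 + (a + b) / (a + 1) * x / (1 - x)) ≤ Q a b x) := by
  obtain ⟨hx₀, hx₁⟩ := hx
  have hbounds : ∀ y ∈ Icc (0:ℝ) 1, 0 < 1 - x ∧ 1 - x ≤ 1 - x * y ∧ 1 - x * y ≤ 1 :=
    fun y ⟨hy₀, hy₁⟩ => ⟨by linarith, by nlinarith, by nlinarith⟩
  have hf : ContinuousOn (fun y => (1 - x * y) ^ (b - 1)) (Icc 0 1) :=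
    ContinuousOn.rpow_const (by fun_prop) fun y hy => Or.inl (by linarith [hbounds y hy])
  have hg : ContinuousOn
      (fun y => (1 - x) ^ (b - 1) * (1 + (b - 1) * ((1 - x * y) - (1 - x)))) (Icc 0 1) := by
    fun_prop
  rw [← mul_integral_rpow_mul_tangent_eq ha hx₁, Q]
  refine ⟨fun hb₁ => mul_integral_rpow_mono ha hf hg fun y hy => ?_,
    fun hb₁ => mul_integral_rpow_mono ha hg hf fun y hy => ?_⟩
  · obtain ⟨h₁, h₂, h₃⟩ := hbounds y hy
    exact rpow_le_rpow_mul_one_add_of_nonpos (by linarith) (by linarith) h₁ h₂ h₃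
  · obtain ⟨h₁, h₂, h₃⟩ := hbounds y hy
    exact rpow_mul_one_add_le_rpow_of_nonneg (by linarith) h₁ h₂ h₃
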